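/- Let R be a commutative ring and M an R-module such that every non-zerodivisor on M is a non-zerodivisor of R; let U be the set of non-zerodivisors on M, and let k be a nonnegative integer. Identify the total quotient ring of R(+)M with (U⁻¹R)(+)(U⁻¹M), and write each F ∈ ((U⁻¹R)(+)(U⁻¹M))[X] uniquely as F = f + hε with f ∈ (U⁻¹R)[X] and h ∈ (U⁻¹M)[X] (a polynomial with coefficients in the module U⁻¹M). Then F^(j)(z) ∈ R(+)M for all z ∈ R(+)M and all 0 ≤ j ≤ k if and only if: (i) f^(j)(x) ∈ R for all x ∈ R and 0 ≤ j ≤ k, (ii) f^(j)(x)·m ∈ M for all x ∈ R, m ∈ M, and 0 ≤ j ≤ k+1, and (iii) h^(j)(x) ∈ M for all x ∈ R and 0 ≤ j ≤ k. That is, Int^(k)(R(+)M) = (Int^(k+1)_M(R) ∩ Int^(k)(R)) + Int^(k)(R, M)·ε. -/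

import Mathlib

/-! Since `ε² = 0`, evaluation over `R(+)M` is first-order Taylor expansion:
`F (x + mε) = F x + (F' x)·mε`. For `F = f + hε` this gives
`F⁽ʲ⁾(x + mε) = f⁽ʲ⁾(x) + (f⁽ʲ⁺¹⁾(x)·m + h⁽ʲ⁾(x))ε`. Taking `m = 0` isolates (iii), subtracting it
gives (ii) for `1 ≤ j ≤ k + 1`, and (ii) for `j = 0` follows from (i) because `R·M ⊆ M`. -/

open Polynomial TrivSqZeroExt

/-- The multiplicative set `U` of all non-zerodivisors on the module `M`. -/
def regOnSubmonoid (R M : Type*) [CommRing R] [AddCommGroup M] [Module R M] :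
    Submonoid R where
  carrier := {a : R | ∀ m : M, a • m = 0 → m = 0}
  one_mem' := fun m hm => by simpa using hm
  mul_mem' := by
    intro a b ha hb m hm
    rw [mul_smul] at hm
    exact hb m (ha _ hm)

section

variable (R M : Type*) [CommRing R] [AddCommGroup M] [Module R M]

/-- The right-module structure on `U⁻¹M` over `(U⁻¹R)ᵐᵒᵖ` given by commutativity. -/
noncomputable local instance locMopModule :
    Module (Localization (regOnSubmonoid R M))ᵐᵒᵖ
      (LocalizedModule (regOnSubmonoid R M) M) :=
  Module.compHom _ ((RingHom.id (Localization (regOnSubmonoid R M))).fromOpposite mul_comm)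

local instance locCentral :
    IsCentralScalar (Localization (regOnSubmonoid R M))
      (LocalizedModule (regOnSubmonoid R M) M) :=
  ⟨fun _ _ => rfl⟩

namespace TrivSqZeroExt

theorem mul_inr_eq_inr_fst_smul {A N : Type*} [Semiring A] [AddCommMonoid N] [Module A N]
    [Module Aᵐᵒᵖ N] (x : TrivSqZeroExt A N) (m : N) : x * inr m = inr (x.fst • m) := by
  ext <;> simp [fst_mul, snd_mul]

variable {A N : Type*} [CommSemiring A] [AddCommMonoid N] [Module A N] [Module Aᵐᵒᵖ N]
  [IsCentralScalar A N]

theorem fst_eval (P : (TrivSqZeroExt A N)[X]) (z : TrivSqZeroExt A N) :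
    (P.eval z).fst = (P.map (fstHom A A N : TrivSqZeroExt A N →+* A)).eval z.fst :=
  (eval_map_apply (fstHom A A N : TrivSqZeroExt A N →+* A) z).symm

theorem snd_eval_inl_add_inr (P : (TrivSqZeroExt A N)[X]) (a : A) (m : N) :
    (P.eval (inl a + inr m)).snd =
      (P.eval (inl a)).snd +
        ((derivative P).map (fstHom A A N : TrivSqZeroExt A N →+* A)).eval a • m := by
  rw [eval_add_of_sq_eq_zero _ _ _ (by rw [sq, inr_mul_inr]), mul_inr_eq_inr_fst_smul, fst_eval,
    fst_inl, snd_add, snd_inr]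

theorem eval_map_inlHom (p : A[X]) (a : A) :
    (p.map (inlHom A N)).eval (inl a) = inl (p.eval a) := by
  rw [eval_map, ← inlHom_apply, eval₂_hom]; rfl

theorem map_fstHom_sum_C_inr_mul_X_pow (h : ℕ →₀ N) :
    (h.sum fun i m => C (inr m : TrivSqZeroExt A N) * X ^ i).map
      (fstHom A A N : TrivSqZeroExt A N →+* A) = 0 := by
  simp [Finsupp.sum, Polynomial.map_sum]

theorem fstHom_comp_inlHom : (fstHom A A N : TrivSqZeroExt A N →+* A).comp (inlHom A N) = .id A :=
  RingHom.ext fun _ => rfl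

theorem fst_eval_iterate_derivative_map_inlHom_add (f : A[X]) {H : (TrivSqZeroExt A N)[X]}
    (hH : H.map (fstHom A A N : TrivSqZeroExt A N →+* A) = 0) (j : ℕ) (a : A) (m : N) :
    ((derivative^[j] (f.map (inlHom A N) + H)).eval (inl a + inr m)).fst =
      (derivative^[j] f).eval a := by
  rw [fst_eval, ← iterate_derivative_map, Polynomial.map_add, hH, add_zero, map_map,
    fstHom_comp_inlHom, Polynomial.map_id, fst_add, fst_inl, fst_inr, add_zero]

theorem snd_eval_iterate_derivative_map_inlHom_add (f : A[X]) {H : (TrivSqZeroExt A N)[X]}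
    (hH : H.map (fstHom A A N : TrivSqZeroExt A N →+* A) = 0) (j : ℕ) (a : A) (m : N) :
    ((derivative^[j] (f.map (inlHom A N) + H)).eval (inl a + inr m)).snd =
      (derivative^[j + 1] f).eval a • m + ((derivative^[j] H).eval (inl a)).snd := by
  rw [snd_eval_inl_add_inr, ← Function.iterate_succ_apply' derivative, ← iterate_derivative_map,
    Polynomial.map_add, hH, add_zero, map_map, fstHom_comp_inlHom, Polynomial.map_id,
    iterate_map_add, eval_add, iterate_derivative_map, eval_map_inlHom, snd_add, snd_inl, zero_add,
    add_comm]

end TrivSqZeroExt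

theorem forall_le_and_add_mem_iff {X Y N G : Type*} [AddCommGroup N] [Zero Y] [SetLike G N]
    [AddSubgroupClass G N] (S : G) (k : ℕ) (p : ℕ → X → Prop) (u : ℕ → X → Y → N)
    (h : ℕ → X → N) (hu : ∀ j x, u j x 0 = 0) (hu₀ : ∀ x, p 0 x → ∀ y, u 0 x y ∈ S) :
    (∀ j ≤ k, ∀ x y, p j x ∧ u (j + 1) x y + h j x ∈ S) ↔
      (∀ j ≤ k, ∀ x, p j x) ∧ (∀ j ≤ k + 1, ∀ x y, u j x y ∈ S) ∧
        (∀ j ≤ k, ∀ x, h j x ∈ S) := by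
  constructor
  · intro hk
    have hh : ∀ j ≤ k, ∀ x, h j x ∈ S := fun j hj x => by
      simpa [hu] using (hk j hj x 0).2
    refine ⟨fun j hj x => (hk j hj x 0).1, ?_, hh⟩
    rintro (_ | j) hj x y
    · exact hu₀ x (hk 0 (Nat.zero_le k) x 0).1 y
    · have hj : j ≤ k := by omega
      simpa using sub_mem (hk j hj x y).2 (hh j hj x)
  · rintro ⟨hp, hu', hh⟩ j hj x y
    exact ⟨hp j hj x, add_mem (hu' (j + 1) (by omega) x y) (hh j hj x)⟩

theorem intPolyDeriv_idealization
    (k : ℕ) (f : Polynomial (Localization (regOnSubmonoid R M)))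
    (hM : ℕ →₀ LocalizedModule (regOnSubmonoid R M) M) :
    (∀ j ≤ k, ∀ (x : R) (mm : M),
        ((derivative^[j]
            (f.map (inlHom (Localization (regOnSubmonoid R M))
                (LocalizedModule (regOnSubmonoid R M) M)) +
              hM.sum fun i mi => Polynomial.C (inr mi) * X ^ i)).eval
          (inl (algebraMap R (Localization (regOnSubmonoid R M)) x) +
            inr (LocalizedModule.mkLinearMap (regOnSubmonoid R M) M mm))).fst
            ∈ Set.range (algebraMap R (Localization (regOnSubmonoid R M))) ∧
        ((derivative^[j]
            (f.map (inlHom (Localization (regOnSubmonoid R M))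
                (LocalizedModule (regOnSubmonoid R M) M)) +
              hM.sum fun i mi => Polynomial.C (inr mi) * X ^ i)).eval
          (inl (algebraMap R (Localization (regOnSubmonoid R M)) x) +
            inr (LocalizedModule.mkLinearMap (regOnSubmonoid R M) M mm))).snd
            ∈ Set.range ⇑(LocalizedModule.mkLinearMap (regOnSubmonoid R M) M))
      ↔ ((∀ j ≤ k, ∀ x : R,
            (derivative^[j] f).eval (algebraMap R (Localization (regOnSubmonoid R M)) x)
              ∈ Set.range (algebraMap R (Localization (regOnSubmonoid R M)))) ∧
          (∀ j ≤ k + 1, ∀ (x : R) (mm : M),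
            (derivative^[j] f).eval (algebraMap R (Localization (regOnSubmonoid R M)) x) •
                LocalizedModule.mkLinearMap (regOnSubmonoid R M) M mm
              ∈ Set.range ⇑(LocalizedModule.mkLinearMap (regOnSubmonoid R M) M)) ∧
          (∀ j ≤ k, ∀ x : R,
            ((derivative^[j]
                (hM.sum fun i mi =>
                  Polynomial.C
                      (inr mi : TrivSqZeroExt (Localization (regOnSubmonoid R M))
                        (LocalizedModule (regOnSubmonoid R M) M)) * X ^ i)).eval
              (inl (algebraMap R (Localization (regOnSubmonoid R M)) x))).snd
              ∈ Set.range ⇑(LocalizedModule.mkLinearMap (regOnSubmonoid R M) M))) := by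
  have hH := map_fstHom_sum_C_inr_mul_X_pow (A := Localization (regOnSubmonoid R M)) hM
  simp only [fst_eval_iterate_derivative_map_inlHom_add f hH,
    snd_eval_iterate_derivative_map_inlHom_add f hH, ← LinearMap.coe_range, SetLike.mem_coe]
  refine forall_le_and_add_mem_iff (LinearMap.range (LocalizedModule.mkLinearMap _ M)) k _
    (fun j x mm => (derivative^[j] f).eval (algebraMap R _ x) •
      LocalizedModule.mkLinearMap (regOnSubmonoid R M) M mm) _ (fun _ _ => by simp) ?_
  rintro x ⟨r, hr⟩ mm
  exact ⟨r • mm, by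
    rw [map_smul, ← algebraMap_smul (Localization (regOnSubmonoid R M)) r, hr]⟩

end
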